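/- Let H be Haar-distributed on the orthogonal group O(n) with n ≥ 2. Then E(tr(H²)²) = 3. -/

import Mathlib

/-!
Expand `tr(H²)² = ∑ᵢⱼₖₗ HᵢⱼHⱼᵢHₖₗHₗₖ`. Haar measure is invariant under `H ↦ PHQ` for signed
permutation matrices `P`, `Q`, so a fourth moment vanishes unless its indices pair up, and the
surviving ones reduce to `p = E[H₀₀⁴]`, `q = E[H₀₀²H₀₁²]` and `r = E[H₀₀²H₁₁²]`; this gives
`E[tr(H²)²] = n p + 3 n (n - 1) r`. Since columns have unit length,
`q + (n - 1) r = E[H₀₀² ∑ᵢ Hᵢ₁²] = E[H₀₀²] = 1 / n`.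
Right invariance under an orthogonal matrix whose first column is `(e₀ ± e₁) / √2` shows that
`(H₀₀ ± H₀₁) / √2` has the law of `H₀₀`; adding the two fourth moments gives `p = 3 q`.
Hence `E[tr(H²)²] = 3 n (q + (n - 1) r) = 3`.
-/

open Matrix MeasureTheory

theorem Fintype.sum_eq_apply_add_card_sub_one_mul {ι R : Type*} [Fintype ι] [Ring R]
    {f : ι → R} (x : ι) {c : R} (hf : ∀ i ≠ x, f i = c) :
    ∑ i, f i = f x + (Fintype.card ι - 1) * c := by
  classical
  rw [Fintype.sum_eq_add_sum_compl x, Finset.sum_congr rfl fun i hi => hf i (by simpa using hi),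
    Finset.sum_const, Finset.card_compl, Finset.card_singleton, nsmul_eq_mul,
    Nat.cast_sub (Fintype.card_pos_iff.mpr ⟨x⟩)]
  norm_num

namespace Matrix

variable {ι R : Type*} [Fintype ι] [DecidableEq ι]

theorem trace_sq_eq_sum [Semiring R] (M : Matrix ι ι R) :
    trace (M ^ 2) = ∑ i, ∑ j, M i j * M j i := by
  simp [trace, sq, mul_apply]

theorem trace_sq_submatrix [Semiring R] (M : Matrix ι ι R) (σ : Equiv.Perm ι) :
    trace (M.submatrix σ σ ^ 2) = trace (M ^ 2) := by
  simp only [trace_sq_eq_sum, submatrix_apply]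
  calc ∑ i, ∑ j, M (σ i) (σ j) * M (σ j) (σ i) = ∑ i, ∑ j, M (σ i) j * M j (σ i) :=
        Fintype.sum_congr _ _ fun i => Equiv.sum_comp σ fun j => M (σ i) j * M j (σ i)
    _ = ∑ i, ∑ j, M i j * M j i := Equiv.sum_comp σ fun i => ∑ j, M i j * M j i

section CommRing

variable [CommRing R]

theorem sum_apply_sq_of_mem_orthogonalGroup {H : Matrix ι ι R} (hH : H ∈ orthogonalGroup ι R)
    (i : ι) : ∑ j, H i j ^ 2 = 1 := by
  simpa [mul_apply, sq] using congrFun₂ ((mem_orthogonalGroup_iff ι R).mp hH) i i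

theorem sum_apply_sq_of_mem_orthogonalGroup' {H : Matrix ι ι R} (hH : H ∈ orthogonalGroup ι R)
    (j : ι) : ∑ i, H i j ^ 2 = 1 := by
  simpa [mul_apply, sq] using congrFun₂ ((mem_orthogonalGroup_iff' ι R).mp hH) j j

theorem permMatrix_mem_orthogonalGroup (σ : Equiv.Perm ι) :
    σ.permMatrix R ∈ orthogonalGroup ι R := by
  rw [mem_orthogonalGroup_iff, transpose_permMatrix, ← permMatrix_mul, inv_mul_cancel,
    permMatrix_one]

theorem diagonal_mem_orthogonalGroup {d : ι → R} (hd : ∀ i, d i * d i = 1) :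
    diagonal d ∈ orthogonalGroup ι R := by
  rw [mem_orthogonalGroup_iff, diagonal_transpose, diagonal_mul_diagonal, funext hd,
    diagonal_one]

end CommRing

theorem exists_mem_orthogonalGroup_apply_eq (a : ι) {w : ι → ℝ} (hw : w ⬝ᵥ w = 1) :
    ∃ Q ∈ orthogonalGroup ι ℝ, ∀ i, Q i a = w i := by
  let b := EuclideanSpace.basisFun ι ℝ
  let e : EuclideanSpace ℝ ι := EuclideanSpace.single a 1
  let v : EuclideanSpace ℝ ι := WithLp.toLp 2 w
  have hv : ‖e‖ = ‖v‖ := by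
    rw [← sq_eq_sq₀ (norm_nonneg _) (norm_nonneg _), EuclideanSpace.real_norm_sq_eq,
      EuclideanSpace.real_norm_sq_eq]
    simpa [e, v, dotProduct, sq, Pi.single_apply] using hw.symm
  let R := Submodule.reflection (ℝ ∙ (e - v))ᗮ
  refine ⟨(R : EuclideanSpace ℝ ι →ₗ[ℝ] EuclideanSpace ℝ ι).toMatrix b.toBasis b.toBasis,
    R.toMatrix_mem_unitaryGroup b b, fun i => ?_⟩
  rw [LinearMap.toMatrix_apply]
  simp only [b, EuclideanSpace.basisFun_toBasis, PiLp.basisFun_apply, PiLp.basisFun_repr]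
  have hRe : R e = v := Submodule.reflection_sub hv
  exact congrArg (fun x : EuclideanSpace ℝ ι => x i) hRe

end Matrix

theorem MeasureTheory.Measure.isMulRightInvariant_of_isProbabilityMeasure {G : Type*} [Group G]
    [TopologicalSpace G] [IsTopologicalGroup G] [LocallyCompactSpace G] [MeasurableSpace G]
    [BorelSpace G] (μ : Measure G) [μ.IsHaarMeasure] [IsProbabilityMeasure μ] :
    μ.IsMulRightInvariant where
  map_mul_right_eq_self g := by
    have := Measure.isProbabilityMeasure_map (μ := μ) (measurable_mul_const g).aemeasurable
    exact Measure.isHaarMeasure_eq_of_isProbabilityMeasure _ μ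

namespace Matrix.orthogonalGroup

variable {ι : Type*} [Fintype ι] [DecidableEq ι]

instance : CompactSpace (orthogonalGroup ι ℝ) := by
  refine isCompact_iff_compactSpace.mp <| (isCompact_univ_pi fun _ => isCompact_univ_pi
    fun _ => ProperSpace.isCompact_closedBall (0 : ℝ) 1).of_isClosed_subset
    (isClosed_unitary (R := Matrix ι ι ℝ)) ?_
  intro U hU i _ j _
  simpa using entry_norm_bound_of_unitary hU i j

@[fun_prop]
theorem continuous_val_apply (i j : ι) : Continuous fun H : orthogonalGroup ι ℝ => H.1 i j :=
  (continuous_apply_apply i j).comp continuous_subtype_val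

variable [MeasurableSpace (orthogonalGroup ι ℝ)] [BorelSpace (orthogonalGroup ι ℝ)]
  (μ : Measure (orthogonalGroup ι ℝ)) [μ.IsHaarMeasure]

theorem integrable_of_continuous {E : Type*} [NormedAddCommGroup E]
    {f : orthogonalGroup ι ℝ → E} (hf : Continuous f) : Integrable f μ :=
  hf.integrable_of_hasCompactSupport (.of_compactSpace f)

variable {E : Type*} [NormedAddCommGroup E] [NormedSpace ℝ E]

theorem integral_comp_mul_left {P : Matrix ι ι ℝ} (hP : P ∈ orthogonalGroup ι ℝ)
    (F : Matrix ι ι ℝ → E) : ∫ H, F (P * H.1) ∂μ = ∫ H, F H.1 ∂μ :=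
  integral_mul_left_eq_self (fun H : orthogonalGroup ι ℝ => F H) ⟨P, hP⟩

theorem integral_eq_zero_of_neg_row (r : ι) {F : Matrix ι ι ℝ → ℝ}
    (hF : ∀ M, F (diagonal (Pi.mulSingle r (-1)) * M) = -F M) : ∫ H, F H.1 ∂μ = 0 := by
  have hD : diagonal (Pi.mulSingle r (-1 : ℝ)) ∈ orthogonalGroup ι ℝ :=
    diagonal_mem_orthogonalGroup fun i => by by_cases h : i = r <;> simp [h]
  have := integral_comp_mul_left μ hD F
  simp only [hF, integral_neg] at this
  linarith

theorem integral_mul_trace_sq_eq_sum {G : Matrix ι ι ℝ → ℝ} (hG : Continuous G) :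
    ∫ H, G H.1 * trace (H.1 ^ 2) ∂μ = ∑ k, ∑ l, ∫ H, G H.1 * (H.1 k l * H.1 l k) ∂μ := by
  simp only [trace_sq_eq_sum, Finset.mul_sum]
  rw [integral_finsetSum _ fun k _ => integrable_of_continuous μ (by fun_prop)]
  exact Fintype.sum_congr _ _ fun k =>
    integral_finsetSum _ fun l _ => integrable_of_continuous μ (by fun_prop)

variable [IsProbabilityMeasure μ]

theorem integral_comp_mul_right {Q : Matrix ι ι ℝ} (hQ : Q ∈ orthogonalGroup ι ℝ)
    (F : Matrix ι ι ℝ → E) : ∫ H, F (H.1 * Q) ∂μ = ∫ H, F H.1 ∂μ :=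
  have := μ.isMulRightInvariant_of_isProbabilityMeasure
  integral_mul_right_eq_self (fun H : orthogonalGroup ι ℝ => F H) ⟨Q, hQ⟩

theorem integral_comp_submatrix (σ τ : Equiv.Perm ι) (F : Matrix ι ι ℝ → E) :
    ∫ H, F (H.1.submatrix σ τ) ∂μ = ∫ H, F H.1 ∂μ := by
  have h (M : Matrix ι ι ℝ) : M.submatrix σ τ = σ.permMatrix ℝ * M * τ⁻¹.permMatrix ℝ := by
    rw [PEquiv.toMatrix_toPEquiv_mul, PEquiv.mul_toMatrix_toPEquiv]
    rfl
  simp only [h]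
  rw [integral_comp_mul_left μ (permMatrix_mem_orthogonalGroup σ) (fun M => F (M * _)),
    integral_comp_mul_right μ (permMatrix_mem_orthogonalGroup _)]

theorem integral_comp_mulVec (a : ι) {w : ι → ℝ} (hw : w ⬝ᵥ w = 1) (F : (ι → ℝ) → E) :
    ∫ H, F (H.1 *ᵥ w) ∂μ = ∫ H, F (fun i => H.1 i a) ∂μ := by
  obtain ⟨Q, hQ, hQa⟩ := exists_mem_orthogonalGroup_apply_eq a hw
  rw [← integral_comp_mul_right μ hQ fun M => F fun i => M i a]
  congr 1 with H
  congr 1 with i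
  simp [mul_apply, mulVec, dotProduct, hQa]

theorem integral_apply_sq (a b : ι) :
    ∫ H, H.1 a b ^ 2 ∂μ = 1 / Fintype.card ι := by
  have hcol (j : ι) : ∫ H, H.1 a j ^ 2 ∂μ = ∫ H, H.1 a b ^ 2 ∂μ := by
    simpa using integral_comp_submatrix μ 1 (Equiv.swap b j) fun M => M a b ^ 2
  have hrow : ∑ j, ∫ H, H.1 a j ^ 2 ∂μ = 1 := by
    rw [← integral_finsetSum _ fun j _ => integrable_of_continuous μ (by fun_prop)]
    simp [sum_apply_sq_of_mem_orthogonalGroup (Subtype.prop _)]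
  simp only [hcol, Finset.sum_const, Finset.card_univ, nsmul_eq_mul] at hrow
  rw [eq_div_iff (Nat.cast_ne_zero.mpr (Fintype.card_pos_iff.mpr ⟨a⟩).ne'), mul_comm, hrow]

theorem integral_sq_mul_sq_add_card_sub_one_mul {a b : ι} (hab : a ≠ b) :
    ∫ H, H.1 a a ^ 2 * H.1 a b ^ 2 ∂μ + (Fintype.card ι - 1) * ∫ H, H.1 a a ^ 2 * H.1 b b ^ 2 ∂μ
      = 1 / Fintype.card ι := by
  have hrow (i : ι) (hi : i ≠ a) :
      ∫ H, H.1 a a ^ 2 * H.1 i b ^ 2 ∂μ = ∫ H, H.1 a a ^ 2 * H.1 b b ^ 2 ∂μ := by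
    simpa [Equiv.swap_apply_of_ne_of_ne hab hi.symm] using
      integral_comp_submatrix μ (Equiv.swap b i) 1 fun M => M a a ^ 2 * M b b ^ 2
  calc _ = ∑ i, ∫ H, H.1 a a ^ 2 * H.1 i b ^ 2 ∂μ :=
        (Fintype.sum_eq_apply_add_card_sub_one_mul a hrow).symm
    _ = ∫ H, H.1 a a ^ 2 * ∑ i, H.1 i b ^ 2 ∂μ := by
        rw [← integral_finsetSum _ fun i _ => integrable_of_continuous μ (by fun_prop)]
        simp only [Finset.mul_sum]
    _ = 1 / Fintype.card ι := by
        simp only [sum_apply_sq_of_mem_orthogonalGroup' (Subtype.prop _), mul_one]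
        exact integral_apply_sq μ a a

theorem integral_pow_four_eq_three_mul {a b : ι} (hab : a ≠ b) :
    ∫ H, H.1 a a ^ 4 ∂μ = 3 * ∫ H, H.1 a a ^ 2 * H.1 a b ^ 2 ∂μ := by
  have h2 : √2 ^ 2 = 2 := Real.sq_sqrt zero_le_two
  have hmix (s : ℝ) (hs : s ^ 2 = 1) :
      ∫ H, (H.1 a a + s * H.1 a b) ^ 4 ∂μ = ∫ H, 4 * H.1 a a ^ 4 ∂μ := by
    let w : ι → ℝ := (√2)⁻¹ • (Pi.single a 1 + s • Pi.single b 1)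
    have hw : w ⬝ᵥ w = 1 := by
      simp [w, dotProduct_add, hab, hab.symm]
      field_simp
      linear_combination hs - h2
    convert integral_comp_mulVec μ a hw (fun v => (√2 * v a) ^ 4) using 3 with H
    · simp [w, mulVec_add, mulVec_smul]
      field_simp
    · rw [mul_pow, show √2 ^ 4 = 4 by rw [show 4 = 2 * 2 by rfl, pow_mul, h2]; norm_num]
  have hcol : ∫ H, H.1 a b ^ 4 ∂μ = ∫ H, H.1 a a ^ 4 ∂μ := by
    simpa using integral_comp_submatrix μ 1 (Equiv.swap a b) fun M => M a a ^ 4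
  have hint {f : orthogonalGroup ι ℝ → ℝ} (hf : Continuous f) : Integrable f μ :=
    integrable_of_continuous μ hf
  have hexp (x y : ℝ) : (x + 1 * y) ^ 4 + (x + -1 * y) ^ 4 =
      2 * x ^ 4 + 12 * (x ^ 2 * y ^ 2) + 2 * y ^ 4 := by ring
  have hsum : 8 * ∫ H, H.1 a a ^ 4 ∂μ = 4 * ∫ H, H.1 a a ^ 4 ∂μ
      + 12 * ∫ H, H.1 a a ^ 2 * H.1 a b ^ 2 ∂μ :=
    calc 8 * ∫ H, H.1 a a ^ 4 ∂μ
        = ∫ H, ((H.1 a a + 1 * H.1 a b) ^ 4 + (H.1 a a + -1 * H.1 a b) ^ 4) ∂μ := by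
          rw [integral_add (hint (by fun_prop)) (hint (by fun_prop)), hmix 1 (one_pow 2),
            hmix (-1) (by norm_num), integral_const_mul]
          ring
      _ = _ := by
          simp only [hexp]
          rw [integral_add (hint (by fun_prop)) (hint (by fun_prop)),
            integral_add (hint (by fun_prop)) (hint (by fun_prop)), integral_const_mul,
            integral_const_mul, integral_const_mul, hcol]
          ring
  linarith

theorem integral_perm_apply_mul_trace_sq (σ : Equiv.Perm ι) (i j : ι) :
    ∫ H, H.1 (σ i) (σ j) * H.1 (σ j) (σ i) * trace (H.1 ^ 2) ∂μ
      = ∫ H, H.1 i j * H.1 j i * trace (H.1 ^ 2) ∂μ := by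
  have := integral_comp_submatrix μ σ σ fun M => M i j * M j i * trace (M ^ 2)
  simp only [submatrix_apply] at this
  rw [← this]
  congr 1 with H
  rw [trace_sq_submatrix]

theorem integral_diag_mul_trace_sq {a b : ι} (hab : a ≠ b) :
    ∫ H, H.1 a a * H.1 a a * trace (H.1 ^ 2) ∂μ
      = ∫ H, H.1 a a ^ 4 ∂μ + (Fintype.card ι - 1) * ∫ H, H.1 a a ^ 2 * H.1 b b ^ 2 ∂μ := by
  have hoff (k l : ι) (hlk : l ≠ k) :
      ∫ H, H.1 a a * H.1 a a * (H.1 k l * H.1 l k) ∂μ = 0 :=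
    integral_eq_zero_of_neg_row μ k (F := fun M => M a a * M a a * (M k l * M l k)) fun M => by
      by_cases hak : a = k <;> simp [diagonal_mul, hlk, hak]
  have hdiag (k : ι) (hka : k ≠ a) :
      ∫ H, H.1 a a * H.1 a a * (H.1 k k * H.1 k k) ∂μ = ∫ H, H.1 a a ^ 2 * H.1 b b ^ 2 ∂μ := by
    have := integral_comp_submatrix μ (Equiv.swap b k) (Equiv.swap b k)
      fun M => M a a ^ 2 * M b b ^ 2
    simp only [submatrix_apply, Equiv.swap_apply_of_ne_of_ne hab hka.symm,
      Equiv.swap_apply_left] at this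
    rw [← this]
    congr 1 with H
    ring
  rw [integral_mul_trace_sq_eq_sum μ (G := fun M => M a a * M a a) (by fun_prop),
    Fintype.sum_congr _ _ fun k => Fintype.sum_eq_single k fun l hl => hoff k l hl,
    Fintype.sum_eq_apply_add_card_sub_one_mul a hdiag]
  congr 2 with H
  ring

theorem integral_offDiag_mul_trace_sq {a b : ι} (hab : a ≠ b) :
    ∫ H, H.1 a b * H.1 b a * trace (H.1 ^ 2) ∂μ = 2 * ∫ H, H.1 a a ^ 2 * H.1 b b ^ 2 ∂μ := by
  set g : ι → ι → ℝ := fun k l => ∫ H, H.1 a b * H.1 b a * (H.1 k l * H.1 l k) ∂μ with hg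
  have hzero (r : ι) {k l : ι} (hF : ∀ M : Matrix ι ι ℝ,
      let M' := diagonal (Pi.mulSingle r (-1)) * M
      M' a b * M' b a * (M' k l * M' l k) = -(M a b * M b a * (M k l * M l k))) : g k l = 0 :=
    integral_eq_zero_of_neg_row μ r (F := fun M => M a b * M b a * (M k l * M l k)) hF
  have hdiag (k : ι) : g k k = 0 := hzero a fun M => by
    by_cases hka : k = a <;> simp [diagonal_mul, hab.symm, hka]
  have hrow (k l : ι) (hlk : l ≠ k) (hka : k ≠ a) (hkb : k ≠ b) : g k l = 0 :=
    hzero k fun M => by simp [diagonal_mul, hlk, hka.symm, hkb.symm]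
  have hcol (k l : ι) (hlk : l ≠ k) (hla : l ≠ a) (hlb : l ≠ b) : g k l = 0 :=
    hzero l fun M => by simp [diagonal_mul, hlk.symm, hla.symm, hlb.symm]
  have hsym : g a b = ∫ H, H.1 a a ^ 2 * H.1 b b ^ 2 ∂μ := by
    have := integral_comp_submatrix μ 1 (Equiv.swap a b) fun M => M a a ^ 2 * M b b ^ 2
    simp only [submatrix_apply, Equiv.Perm.coe_one, id_eq, Equiv.swap_apply_left,
      Equiv.swap_apply_right] at this
    simp only [hg, ← this]
    congr 1 with H
    ring
  have hswap : g b a = g a b := by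
    simp only [hg]
    congr 1 with H
    ring
  rw [integral_mul_trace_sq_eq_sum μ (G := fun M => M a b * M b a) (by fun_prop),
    Fintype.sum_eq_add a b hab fun k ⟨hka, hkb⟩ => Fintype.sum_eq_zero _ fun l =>
      if hlk : l = k then hlk ▸ hdiag k else hrow k l hlk hka hkb,
    Fintype.sum_eq_single b fun l hlb =>
      if hla : l = a then hla ▸ hdiag a else hcol a l hla hla hlb,
    Fintype.sum_eq_single a fun l hla =>
      if hlb : l = b then hlb ▸ hdiag b else hcol b l hlb hla hlb,
    hswap, hsym, two_mul]

theorem integral_trace_sq_sq {a b : ι} (hab : a ≠ b) :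
    ∫ H, trace (H.1 ^ 2) ^ 2 ∂μ = Fintype.card ι * ∫ H, H.1 a a ^ 4 ∂μ
      + 3 * Fintype.card ι * (Fintype.card ι - 1) * ∫ H, H.1 a a ^ 2 * H.1 b b ^ 2 ∂μ := by
  have hdiag (i : ι) : ∫ H, H.1 i i * H.1 i i * trace (H.1 ^ 2) ∂μ
      = ∫ H, H.1 a a * H.1 a a * trace (H.1 ^ 2) ∂μ := by
    simpa using integral_perm_apply_mul_trace_sq μ (Equiv.swap a i) a a
  have hoff (i j : ι) (hji : j ≠ i) : ∫ H, H.1 i j * H.1 j i * trace (H.1 ^ 2) ∂μ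
      = ∫ H, H.1 a b * H.1 b a * trace (H.1 ^ 2) ∂μ := by
    obtain ⟨σ, hσ⟩ := Equiv.Perm.exists_extending_pair ![a, b] ![i, j]
      (injective_pair_iff_ne.mpr hab) (injective_pair_iff_ne.mpr hji.symm)
    have hσa : σ a = i := hσ 0
    have hσb : σ b = j := hσ 1
    rw [← hσa, ← hσb]
    exact integral_perm_apply_mul_trace_sq μ σ a b
  calc ∫ H, trace (H.1 ^ 2) ^ 2 ∂μ
      = ∑ i, ∑ j, ∫ H, H.1 i j * H.1 j i * trace (H.1 ^ 2) ∂μ := by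
        simp only [sq (trace _), mul_comm (trace _),
          integral_mul_trace_sq_eq_sum μ (G := fun M => trace (M ^ 2)) (by fun_prop)]
    _ = ∑ _i : ι, (∫ H, H.1 a a * H.1 a a * trace (H.1 ^ 2) ∂μ
          + (Fintype.card ι - 1) * ∫ H, H.1 a b * H.1 b a * trace (H.1 ^ 2) ∂μ) :=
        Fintype.sum_congr _ _ fun i => by
          rw [Fintype.sum_eq_apply_add_card_sub_one_mul i (hoff i), hdiag]
    _ = _ := by
        rw [Finset.sum_const, Finset.card_univ, nsmul_eq_mul, integral_diag_mul_trace_sq μ hab,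
          integral_offDiag_mul_trace_sq μ hab]
        ring

end Matrix.orthogonalGroup

open Matrix.orthogonalGroup in
/-- For `H` Haar-distributed on `O(n)`, `n ≥ 2`: `E(tr(H²)²) = 3`. -/
theorem haar_expect_sq_trace_sq {n : ℕ} (hn : 2 ≤ n)
    [MeasurableSpace (Matrix.orthogonalGroup (Fin n) ℝ)]
    [BorelSpace (Matrix.orthogonalGroup (Fin n) ℝ)]
    (μ : Measure (Matrix.orthogonalGroup (Fin n) ℝ))
    [μ.IsHaarMeasure] [IsProbabilityMeasure μ] :
    ∫ H, (Matrix.trace (((H : Matrix (Fin n) (Fin n) ℝ)) ^ 2)) ^ 2 ∂μ = 3 := by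
  obtain ⟨a, b, hab⟩ := (Fin.nontrivial_iff_two_le.mpr hn).exists_pair_ne
  have hrel := integral_sq_mul_sq_add_card_sub_one_mul μ hab
  rw [integral_trace_sq_sq μ hab, integral_pow_four_eq_three_mul μ hab]
  simp only [Fintype.card_fin] at hrel ⊢
  field_simp at hrel
  linear_combination 3 * hrel
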